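/- arXiv:2102.09504 — 3 statements merged into one kernel-verified Lean document; each statement's English description precedes it below -/
import Mathlib

section
/- Let Σ_S and Σ_T be real symmetric positive definite D × D matrices, β_S, β_T ∈ ℝ^D, σ_S, σ_T > 0, α > 0, A := I_D − α Σ_T, Ω_k := (1/α) Σ_T⁻¹ (I_D − A^k), and B := (β_T − β_S)(β_T − β_S)ᵀ. Let ε be a real random variable with E[ε] = 0, E[ε²] = σ_T²; let β̂_T and β̂_S be ℝ^D-valued random vectors, mutually independent and independent of ε, with finite second moments, E[β̂_T] = β_T, Cov(β̂_T) = σ_T² Σ_T⁻¹, E[β̂_S] = β_S, Cov(β̂_S) = σ_S² Σ_S⁻¹. For x ∈ ℝ^D set y := xᵀ β_T + ε, ŷ_T := xᵀ β̂_T, β̂_k := A^k β̂_S + (I_D − A^k) β̂_T, ŷ_k := xᵀ β̂_k. Then the transfer gain ΔR_k(x) := E[(y − ŷ_T)²] − E[(y − ŷ_k)²] satisfies ΔR_k(x) = xᵀ H_k x, where H_k = σ_T² (Σ_T⁻¹ − α² Ω_k Σ_T Ω_k) − σ_S² A^k Σ_S⁻¹ A^k − A^k B A^k. -/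
/-!
Both predictions are linear in the two estimators: `y - ŷ = c + ε - (a ⬝ β̂_S + b ⬝ β̂_T)` with
`(a, b) = (0, x)` for `ŷ_T` and `(a, b) = (A^k x, (I - A^k) x)` for `ŷ_k`, and `c = xᵀ β_T`.
The second moment of such a residual is its squared mean plus its variance, and pairwise
independence splits the variance as `Var ε + aᵀ Cov(β̂_S) a + bᵀ Cov(β̂_T) b`. The mean of the
residual of `ŷ_k` is `(A^k x)ᵀ (β_T - β_S)`, which produces the term `A^k B A^k`; since `A`
commutes with `Σ_T`, `α² Ω_k Σ_T Ω_k = (I - A^k) Σ_T⁻¹ (I - A^k)`.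
-/

open Matrix MeasureTheory ProbabilityTheory

section RandomVector

variable {Ω ι : Type*} [MeasurableSpace Ω] {μ : Measure Ω} {X : Ω → ι → ℝ}

noncomputable def covarianceMatrix (X : Ω → ι → ℝ) (μ : Measure Ω) : Matrix ι ι ℝ :=
  Matrix.of fun i j => cov[fun ω => X ω i, fun ω => X ω j; μ]

lemma covarianceMatrix_eq {m : ι → ℝ} {C : Matrix ι ι ℝ} (hm : ∀ i, ∫ ω, X ω i ∂μ = m i)
    (hC : ∀ i j, ∫ ω, (X ω i - m i) * (X ω j - m j) ∂μ = C i j) :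
    covarianceMatrix X μ = C := by
  ext i j
  simp only [covarianceMatrix, covariance, of_apply, hm, hC]

variable [Fintype ι]

lemma memLp_dotProduct [IsFiniteMeasure μ] (hX : ∀ i, MemLp (fun ω => X ω i) 2 μ) (a : ι → ℝ) :
    MemLp (fun ω => a ⬝ᵥ X ω) 2 μ :=
  memLp_finsetSum Finset.univ fun i _ => (hX i).const_mul (a i)

lemma integral_dotProduct (hX : ∀ i, Integrable (fun ω => X ω i) μ) (a : ι → ℝ) :
    ∫ ω, a ⬝ᵥ X ω ∂μ = a ⬝ᵥ fun i => ∫ ω, X ω i ∂μ := by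
  simp only [dotProduct]
  rw [integral_finsetSum _ fun i _ => (hX i).const_mul (a i)]
  simp only [integral_const_mul]

lemma variance_dotProduct [IsFiniteMeasure μ] (hX : ∀ i, MemLp (fun ω => X ω i) 2 μ)
    (a : ι → ℝ) : Var[fun ω => a ⬝ᵥ X ω; μ] = a ⬝ᵥ (covarianceMatrix X μ *ᵥ a) := by
  simp only [dotProduct]
  rw [variance_fun_sum fun i => (hX i).const_mul (a i)]
  simp only [covariance_const_mul_left, covariance_const_mul_right, mulVec, dotProduct,
    covarianceMatrix, of_apply, Finset.mul_sum]
  exact Finset.sum_congr rfl fun i _ => Finset.sum_congr rfl fun j _ => by ring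

lemma measurable_const_dotProduct (a : ι → ℝ) : Measurable fun v : ι → ℝ => a ⬝ᵥ v := by
  fun_prop

end RandomVector

section Moments

variable {Ω : Type*} [MeasurableSpace Ω] {μ : Measure Ω}

lemma integral_sq_eq_variance_add_sq [IsProbabilityMeasure μ] {Z : Ω → ℝ} (hZ : MemLp Z 2 μ) :
    ∫ ω, Z ω ^ 2 ∂μ = Var[Z; μ] + (∫ ω, Z ω ∂μ) ^ 2 := by
  rw [variance_eq_sub hZ]
  simp

lemma variance_add_add_of_indepFun [IsFiniteMeasure μ] {X Y Z : Ω → ℝ} (hX : MemLp X 2 μ)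
    (hY : MemLp Y 2 μ) (hZ : MemLp Z 2 μ)
    (hXY : IndepFun X Y μ) (hXZ : IndepFun X Z μ) (hYZ : IndepFun Y Z μ) :
    Var[X + Y + Z; μ] = Var[X; μ] + Var[Y; μ] + Var[Z; μ] := by
  rw [variance_add (hX.add hY) hZ, covariance_add_left hX hY hZ, hXY.variance_add hX hY,
    hXZ.covariance_eq_zero hX hZ, hYZ.covariance_eq_zero hY hZ]
  ring

end Moments

lemma integral_sq_const_add_sub_dotProduct_add_dotProduct {Ω ι : Type*} [MeasurableSpace Ω]
    {μ : Measure Ω} [IsProbabilityMeasure μ] [Fintype ι] {ε : Ω → ℝ} {X Y : Ω → ι → ℝ}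
    (hXY : IndepFun X Y μ) (hεX : IndepFun ε X μ) (hεY : IndepFun ε Y μ) (hε : MemLp ε 2 μ)
    (hX : ∀ i, MemLp (fun ω => X ω i) 2 μ) (hY : ∀ i, MemLp (fun ω => Y ω i) 2 μ)
    (c : ℝ) (a b : ι → ℝ) :
    ∫ ω, (c + ε ω - (a ⬝ᵥ X ω + b ⬝ᵥ Y ω)) ^ 2 ∂μ
      = (c + ∫ ω, ε ω ∂μ - a ⬝ᵥ (fun i => ∫ ω, X ω i ∂μ) - b ⬝ᵥ (fun i => ∫ ω, Y ω i ∂μ)) ^ 2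
        + Var[ε; μ] + a ⬝ᵥ (covarianceMatrix X μ *ᵥ a) + b ⬝ᵥ (covarianceMatrix Y μ *ᵥ b) := by
  set U := fun ω => (-a) ⬝ᵥ X ω
  set V := fun ω => (-b) ⬝ᵥ Y ω
  have hU : MemLp U 2 μ := memLp_dotProduct hX (-a)
  have hV : MemLp V 2 μ := memLp_dotProduct hY (-b)
  have hW : MemLp (ε + U + V) 2 μ := (hε.add hU).add hV
  have hresidual : ∀ ω, c + ε ω - (a ⬝ᵥ X ω + b ⬝ᵥ Y ω) = c + (ε + U + V) ω := fun ω => by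
    simp only [U, V, Pi.add_apply, neg_dotProduct]
    ring
  have hvar : Var[fun ω => c + (ε + U + V) ω; μ] = Var[ε; μ] + Var[U; μ] + Var[V; μ] := by
    rw [variance_const_add hW.aestronglyMeasurable]
    exact variance_add_add_of_indepFun hε hU hV
      (hεX.comp measurable_id (measurable_const_dotProduct _))
      (hεY.comp measurable_id (measurable_const_dotProduct _))
      (hXY.comp (measurable_const_dotProduct _) (measurable_const_dotProduct _))
  have hmean : ∫ ω, c + (ε + U + V) ω ∂μ
      = c + ∫ ω, ε ω ∂μ - a ⬝ᵥ (fun i => ∫ ω, X ω i ∂μ) - b ⬝ᵥ (fun i => ∫ ω, Y ω i ∂μ) := by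
    have hεi := hε.integrable one_le_two
    have hUi := hU.integrable one_le_two
    rw [integral_add (integrable_const c) (hW.integrable one_le_two), integral_const,
      probReal_univ, one_smul, integral_add' (hεi.add hUi) (hV.integrable one_le_two),
      integral_add' hεi hUi, integral_dotProduct fun i => (hX i).integrable one_le_two,
      integral_dotProduct fun i => (hY i).integrable one_le_two]
    simp only [neg_dotProduct]
    ring
  calc ∫ ω, (c + ε ω - (a ⬝ᵥ X ω + b ⬝ᵥ Y ω)) ^ 2 ∂μ = ∫ ω, (c + (ε + U + V) ω) ^ 2 ∂μ := by
        simp only [hresidual]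
    _ = Var[fun ω => c + (ε + U + V) ω; μ] + (∫ ω, c + (ε + U + V) ω ∂μ) ^ 2 :=
        integral_sq_eq_variance_add_sq ((memLp_const c).add hW)
    _ = _ := by
        rw [hvar, hmean, variance_dotProduct hX, variance_dotProduct hY]
        simp only [neg_dotProduct, mulVec_neg, dotProduct_neg, neg_neg]
        ring

lemma Matrix.IsSymm.dotProduct_mul_mul_mulVec {n : Type*} [Fintype n] {P : Matrix n n ℝ}
    (hP : P.IsSymm) (N : Matrix n n ℝ) (x : n → ℝ) :
    x ⬝ᵥ ((P * N * P) *ᵥ x) = (x ᵥ* P) ⬝ᵥ (N *ᵥ (x ᵥ* P)) := by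
  have hPx : P *ᵥ x = x ᵥ* P := by rw [← vecMul_transpose, hP.eq]
  rw [← mulVec_mulVec, ← mulVec_mulVec, dotProduct_mulVec, hPx]

lemma dotProduct_vecMulVec_self_mulVec {n : Type*} [Fintype n] (b p : n → ℝ) :
    p ⬝ᵥ (vecMulVec b b *ᵥ p) = (p ⬝ᵥ b) ^ 2 := by
  rw [vecMulVec_mulVec]
  simp [dotProduct_comm b p, sq]

lemma Matrix.inv_mul_mul_mul_inv_mul_of_commute {n : Type*} [Fintype n] [DecidableEq n]
    {S M : Matrix n n ℝ} [Invertible S] (h : Commute S M) :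
    S⁻¹ * M * S * (S⁻¹ * M) = M * S⁻¹ * M := by
  have hconj : S⁻¹ * M * S = M := by
    rw [Matrix.mul_assoc, ← h.eq, ← Matrix.mul_assoc, inv_mul_of_invertible, Matrix.one_mul]
  rw [hconj, Matrix.mul_assoc]

theorem transfer_gain_formula_general
    {Ω : Type*} [MeasurableSpace Ω] (μ : Measure Ω) [IsProbabilityMeasure μ]
    {D : ℕ}
    (SS ST : Matrix (Fin D) (Fin D) ℝ) (hST : ST.PosDef)
    (βS βT : Fin D → ℝ) (σS σT : ℝ)
    (α : ℝ) (hα : 0 < α) (k : ℕ)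
    (A : Matrix (Fin D) (Fin D) ℝ) (hA : A = 1 - α • ST)
    (Om : Matrix (Fin D) (Fin D) ℝ) (hOm : Om = (1 / α) • (ST⁻¹ * (1 - A ^ k)))
    (B : Matrix (Fin D) (Fin D) ℝ) (hB : B = vecMulVec (βT - βS) (βT - βS))
    (ε : Ω → ℝ) (βhatT βhatS : Ω → Fin D → ℝ)
    (hindepST : IndepFun βhatS βhatT μ)
    (hindepεS : IndepFun ε βhatS μ)
    (hindepεT : IndepFun ε βhatT μ)
    (hL2ε : MemLp ε 2 μ)
    (hL2T : ∀ i, MemLp (fun ω => βhatT ω i) 2 μ)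
    (hL2S : ∀ i, MemLp (fun ω => βhatS ω i) 2 μ)
    (hεmean : ∫ ω, ε ω ∂μ = 0)
    (hεvar : ∫ ω, (ε ω) ^ 2 ∂μ = σT ^ 2)
    (hmeanT : ∀ i, ∫ ω, βhatT ω i ∂μ = βT i)
    (hcovT : ∀ i j, ∫ ω, (βhatT ω i - βT i) * (βhatT ω j - βT j) ∂μ
      = σT ^ 2 * (ST⁻¹ : Matrix (Fin D) (Fin D) ℝ) i j)
    (hmeanS : ∀ i, ∫ ω, βhatS ω i ∂μ = βS i)
    (hcovS : ∀ i j, ∫ ω, (βhatS ω i - βS i) * (βhatS ω j - βS j) ∂μ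
      = σS ^ 2 * (SS⁻¹ : Matrix (Fin D) (Fin D) ℝ) i j)
    (x : Fin D → ℝ)
    (βhatk : Ω → Fin D → ℝ)
    (hβhatk : ∀ ω, βhatk ω = (A ^ k) *ᵥ βhatS ω + (1 - A ^ k) *ᵥ βhatT ω)
    (Hk : Matrix (Fin D) (Fin D) ℝ)
    (hHk : Hk = σT ^ 2 • (ST⁻¹ - α ^ 2 • (Om * ST * Om))
      - σS ^ 2 • (A ^ k * SS⁻¹ * A ^ k) - A ^ k * B * A ^ k) :
    (∫ ω, ((x ⬝ᵥ βT + ε ω) - x ⬝ᵥ βhatT ω) ^ 2 ∂μ)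
      - (∫ ω, ((x ⬝ᵥ βT + ε ω) - x ⬝ᵥ βhatk ω) ^ 2 ∂μ)
      = x ⬝ᵥ (Hk *ᵥ x) := by
  have : Invertible ST := hST.isUnit.invertible
  have hAk : (A ^ k).IsSymm :=
    hA ▸ (isSymm_one.sub ((by simpa using hST.isHermitian : ST.IsSymm).smul α)).pow k
  have hcomm : Commute ST (1 - A ^ k) :=
    (Commute.one_right ST).sub_right ((hA ▸ (Commute.one_right ST).sub_right
      ((Commute.refl ST).smul_right α)).pow_right k)
  have hΩ : α ^ 2 • (Om * ST * Om) = (1 - A ^ k) * ST⁻¹ * (1 - A ^ k) := by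
    simp only [hOm, Matrix.smul_mul, Matrix.mul_smul, smul_smul]
    rw [inv_mul_mul_mul_inv_mul_of_commute hcomm,
      show α ^ 2 * (1 / α * (1 / α)) = 1 by field_simp [hα.ne'], one_smul]
  have hVarε : Var[ε; μ] = σT ^ 2 := by
    rw [variance_eq_sub hL2ε, hεmean]
    simpa using hεvar
  have hCT : covarianceMatrix βhatT μ = σT ^ 2 • ST⁻¹ := covarianceMatrix_eq hmeanT hcovT
  have hCS : covarianceMatrix βhatS μ = σS ^ 2 • SS⁻¹ := covarianceMatrix_eq hmeanS hcovS
  have hmse := integral_sq_const_add_sub_dotProduct_add_dotProduct hindepST hindepεS hindepεT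
    hL2ε hL2S hL2T (x ⬝ᵥ βT)
  have hmseT := hmse 0 x
  have hmsek := hmse (x ᵥ* A ^ k) (x ᵥ* (1 - A ^ k))
  have hyk : ∀ ω, (x ᵥ* A ^ k) ⬝ᵥ βhatS ω + (x ᵥ* (1 - A ^ k)) ⬝ᵥ βhatT ω = x ⬝ᵥ βhatk ω := by
    simp [hβhatk, dotProduct_add, dotProduct_mulVec]
  have hx : x ⬝ᵥ βT = (x ᵥ* A ^ k) ⬝ᵥ βT + (x ᵥ* (1 - A ^ k)) ⬝ᵥ βT := by
    rw [← add_dotProduct, ← vecMul_add, add_sub_cancel, vecMul_one]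
  simp only [zero_dotProduct, zero_add] at hmseT
  simp only [hyk] at hmsek
  rw [hmseT, hmsek, hHk, hΩ]
  simp only [funext hmeanT, funext hmeanS, hCT, hCS, hVarε, hεmean, hB, sub_mulVec, smul_mulVec,
    dotProduct_sub, dotProduct_smul, smul_eq_mul, hAk.dotProduct_mul_mul_mulVec,
    (isSymm_one.sub hAk).dotProduct_mul_mul_mulVec, dotProduct_vecMulVec_self_mulVec]
  rw [hx]
  ring

/-- Transfer gain of fine-tuning for the linear model: with
`A = I_D − α Σ_T`, `Ω_k = (1/α) Σ_T⁻¹ (I_D − A^k)`, `B = (β_T − β_S)(β_T − β_S)ᵀ`,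
noise `ε` centered with variance `σ_T²`, and estimators `β̂_T`, `β̂_S` (mutually
independent and independent of `ε`) having the stated means and covariances, the
gain `ΔR_k(x) = E[(y − ŷ_T)²] − E[(y − ŷ_k)²]` equals `xᵀ H_k x` where
`H_k = σ_T² (Σ_T⁻¹ − α² Ω_k Σ_T Ω_k) − σ_S² A^k Σ_S⁻¹ A^k − A^k B A^k`. -/
theorem transfer_gain_formula
    {Ω : Type*} [MeasurableSpace Ω] (μ : Measure Ω) [IsProbabilityMeasure μ]
    {D : ℕ}
    (SS ST : Matrix (Fin D) (Fin D) ℝ) (hSS : SS.PosDef) (hST : ST.PosDef)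
    (βS βT : Fin D → ℝ) (σS σT : ℝ) (hσS : 0 < σS) (hσT : 0 < σT)
    (α : ℝ) (hα : 0 < α) (k : ℕ)
    (A : Matrix (Fin D) (Fin D) ℝ) (hA : A = 1 - α • ST)
    (Om : Matrix (Fin D) (Fin D) ℝ) (hOm : Om = (1 / α) • (ST⁻¹ * (1 - A ^ k)))
    (B : Matrix (Fin D) (Fin D) ℝ) (hB : B = vecMulVec (βT - βS) (βT - βS))
    (ε : Ω → ℝ) (βhatT βhatS : Ω → Fin D → ℝ)
    (hindepST : IndepFun βhatS βhatT μ)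
    (hindepεS : IndepFun ε βhatS μ)
    (hindepεT : IndepFun ε βhatT μ)
    (hL2ε : MemLp ε 2 μ)
    (hL2T : ∀ i, MemLp (fun ω => βhatT ω i) 2 μ)
    (hL2S : ∀ i, MemLp (fun ω => βhatS ω i) 2 μ)
    (hεmean : ∫ ω, ε ω ∂μ = 0)
    (hεvar : ∫ ω, (ε ω) ^ 2 ∂μ = σT ^ 2)
    (hmeanT : ∀ i, ∫ ω, βhatT ω i ∂μ = βT i)
    (hcovT : ∀ i j, ∫ ω, (βhatT ω i - βT i) * (βhatT ω j - βT j) ∂μ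
      = σT ^ 2 * (ST⁻¹ : Matrix (Fin D) (Fin D) ℝ) i j)
    (hmeanS : ∀ i, ∫ ω, βhatS ω i ∂μ = βS i)
    (hcovS : ∀ i j, ∫ ω, (βhatS ω i - βS i) * (βhatS ω j - βS j) ∂μ
      = σS ^ 2 * (SS⁻¹ : Matrix (Fin D) (Fin D) ℝ) i j)
    (x : Fin D → ℝ)
    (βhatk : Ω → Fin D → ℝ)
    (hβhatk : ∀ ω, βhatk ω = (A ^ k) *ᵥ βhatS ω + (1 - A ^ k) *ᵥ βhatT ω)
    (Hk : Matrix (Fin D) (Fin D) ℝ)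
    (hHk : Hk = σT ^ 2 • (ST⁻¹ - α ^ 2 • (Om * ST * Om))
      - σS ^ 2 • (A ^ k * SS⁻¹ * A ^ k) - A ^ k * B * A ^ k) :
    (∫ ω, ((x ⬝ᵥ βT + ε ω) - x ⬝ᵥ βhatT ω) ^ 2 ∂μ)
      - (∫ ω, ((x ⬝ᵥ βT + ε ω) - x ⬝ᵥ βhatk ω) ^ 2 ∂μ)
      = x ⬝ᵥ (Hk *ᵥ x) :=
  transfer_gain_formula_general μ SS ST hST βS βT σS σT α hα k A hA Om hOm B hB ε βhatT βhatS
    hindepST hindepεS hindepεT hL2ε hL2T hL2S hεmean hεvar hmeanT hcovT hmeanS hcovS x βhatk hβhatk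
    Hk hHk
end

section
/- Let x ∈ ℝ^D with xᵀ Σ_T⁻¹ x > 0, where Σ_T is symmetric positive definite, σ_T > 0, β_T, β_k ∈ ℝ^D, and V_k symmetric positive semidefinite with xᵀ V_k x > 0. Then the transfer gain ΔR_k(x) = σ_T² xᵀ Σ_T⁻¹ x − xᵀ V_k x − (xᵀ(β_T − β_k))² satisfies the upper bound ΔR_k(x) ≤ U_k(x) := − σ_T² xᵀ Σ_T⁻¹ x · ln( xᵀ V_k x / (σ_T² xᵀ Σ_T⁻¹ x) ). -/
open Matrix

/-- Upper bound on the transfer gain used to select the number of gradient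
iterations: `ΔR_k(x) ≤ U_k(x) = −σ_T² xᵀΣ_T⁻¹x · ln(xᵀV_k x / (σ_T² xᵀΣ_T⁻¹x))`. -/
theorem gain_le_Uk
    {D : ℕ} (ST : Matrix (Fin D) (Fin D) ℝ) (hST : ST.PosDef)
    (x : Fin D → ℝ) (hx : 0 < x ⬝ᵥ (ST⁻¹ *ᵥ x))
    (σT : ℝ) (hσT : 0 < σT)
    (βT βk : Fin D → ℝ)
    (Vk : Matrix (Fin D) (Fin D) ℝ) (hVk : Vk.PosSemidef)
    (hxVk : 0 < x ⬝ᵥ (Vk *ᵥ x))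
    (ΔR Uk : ℝ)
    (hΔR : ΔR = σT ^ 2 * (x ⬝ᵥ (ST⁻¹ *ᵥ x)) - x ⬝ᵥ (Vk *ᵥ x)
      - (x ⬝ᵥ (βT - βk)) ^ 2)
    (hUk : Uk = -(σT ^ 2 * (x ⬝ᵥ (ST⁻¹ *ᵥ x)))
      * Real.log ((x ⬝ᵥ (Vk *ᵥ x)) / (σT ^ 2 * (x ⬝ᵥ (ST⁻¹ *ᵥ x))))) :
    ΔR ≤ Uk := by
  set a := σT ^ 2 * (x ⬝ᵥ (ST⁻¹ *ᵥ x)) with ha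
  set b := x ⬝ᵥ (Vk *ᵥ x) with hb
  have hapos : 0 < a := by positivity
  have hlog : Real.log (b / a) ≤ b / a - 1 :=
    Real.log_le_sub_one_of_pos (by positivity)
  have h : a - b ≤ -a * Real.log (b / a) := by
    have := mul_le_mul_of_nonneg_left hlog hapos.le
    have hdiv : a * (b / a - 1) = b - a := by field_simp
    nlinarith
  nlinarith [sq_nonneg (x ⬝ᵥ (βT - βk))]
end

section
/- Let Σ_S, Σ_T be real symmetric positive definite D × D matrices, β_S, β_T ∈ ℝ^D, σ_S, σ_T > 0, and 0 < α < 2/λ_max(Σ_T) where λ_max(Σ_T) is the largest eigenvalue of Σ_T. With A := I_D − α Σ_T, Ω_k := (1/α) Σ_T⁻¹ (I_D − A^k), B := (β_T − β_S)(β_T − β_S)ᵀ, and H_k := σ_T² (Σ_T⁻¹ − α² Ω_k Σ_T Ω_k) − σ_S² A^k Σ_S⁻¹ A^k − A^k B A^k, one has H_k → 0 as k → ∞; in particular, for every x ∈ ℝ^D the transfer gain ΔR_k(x) = xᵀ H_k x converges to 0 as k → ∞. -/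
/-!
Diagonalising `Σ_T` shows that `A = 1 - α Σ_T` is unitarily similar to the diagonal matrix of the
`1 - α λᵢ`, and `0 < α < 2 / λ_max` puts each of these in `(-1, 1)`, so `A ^ k → 0`. The gain
matrix is a continuous function of `A ^ k`, and its value at `A ^ k = 0` is
`σ_T² (Σ_T⁻¹ - Σ_T⁻¹ Σ_T Σ_T⁻¹) = 0`.
-/

open Matrix Filter Topology

theorem Matrix.tendsto_diagonal_pow_nhds_zero {n R : Type*} [Fintype n] [DecidableEq n]
    [NormedRing R] {d : n → R} (hd : ∀ i, ‖d i‖ < 1) :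
    Tendsto (fun k : ℕ => diagonal d ^ k) atTop (𝓝 0) := by
  simp only [diagonal_pow, ← diagonal_zero]
  exact (continuous_id.matrix_diagonal.tendsto 0).comp
    (tendsto_pi_nhds.2 fun i => tendsto_pow_atTop_nhds_zero_of_norm_lt_one (hd i))

theorem Matrix.IsHermitian.tendsto_pow_one_sub_smul {n 𝕜 : Type*} [Fintype n] [DecidableEq n]
    [RCLike 𝕜] {M : Matrix n n 𝕜} (hM : M.IsHermitian) {α : ℝ}
    (h : ∀ i, |1 - α * hM.eigenvalues i| < 1) :
    Tendsto (fun k : ℕ => (1 - α • M) ^ k) atTop (𝓝 0) := by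
  set conj := Unitary.conjStarAlgAut 𝕜 (Matrix n n 𝕜) hM.eigenvectorUnitary
  set d : n → 𝕜 := fun i => ((1 - α * hM.eigenvalues i : ℝ) : 𝕜)
  have hdiag : 1 - α • M = conj (diagonal d) := by
    have : diagonal d = 1 - (α : 𝕜) • diagonal (RCLike.ofReal ∘ hM.eigenvalues) := by
      ext i j
      by_cases hij : i = j <;> simp [d, hij]
    rw [this, map_sub, map_one, map_smul conj (α : 𝕜), ← hM.spectral_theorem,
      RCLike.real_smul_eq_coe_smul (K := 𝕜) α M]
  have hconj : Continuous conj := by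
    have : ⇑conj = fun X => (hM.eigenvectorUnitary : Matrix n n 𝕜) * X *
        star (hM.eigenvectorUnitary : Matrix n n 𝕜) := rfl
    rw [this]
    fun_prop
  have hd : ∀ i, ‖d i‖ < 1 := fun i => by simpa only [d, RCLike.norm_ofReal] using h i
  have hlim := (hconj.tendsto 0).comp (tendsto_diagonal_pow_nhds_zero hd)
  rw [map_zero] at hlim
  exact hlim.congr fun k => by rw [Function.comp_apply, map_pow, hdiag]

theorem abs_one_sub_mul_lt_one {α μ L : ℝ} (hμ : 0 < μ) (hμL : μ ≤ L) (hα : 0 < α)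
    (hαL : α < 2 / L) : |1 - α * μ| < 1 := by
  have : α * μ < 2 := calc
    α * μ ≤ α * L := by gcongr
    _ < 2 := (lt_div_iff₀ (hμ.trans_le hμL)).mp hαL
  exact abs_lt.2 ⟨by nlinarith, by nlinarith⟩

theorem Matrix.tendsto_inv_mul_one_sub_mul_mul {n R : Type*} [Fintype n] [DecidableEq n]
    [CommRing R] [TopologicalSpace R] [IsTopologicalRing R] {ι : Type*} {l : Filter ι}
    {S : Matrix n n R} (hS : IsUnit S.det) {P : ι → Matrix n n R} (hP : Tendsto P l (𝓝 0)) :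
    Tendsto (fun k => S⁻¹ * (1 - P k) * S * (S⁻¹ * (1 - P k))) l (𝓝 S⁻¹) := by
  have hΩ : Tendsto (fun k => S⁻¹ * (1 - P k)) l (𝓝 S⁻¹) := by
    simpa using (tendsto_const_nhds (x := (1 : Matrix n n R)).sub hP).const_mul S⁻¹
  simpa [nonsing_inv_mul S hS] using (hΩ.mul_const S).mul hΩ

theorem gain_matrix_tendsto_zero_general
    {D : ℕ} (SS ST : Matrix (Fin D) (Fin D) ℝ)
    (hST : ST.PosDef)
    (σS σT : ℝ)
    (lmax : ℝ) (hlmax : IsGreatest (Set.range hST.1.eigenvalues) lmax)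
    (α : ℝ) (hα : 0 < α ∧ α < 2 / lmax)
    (A : Matrix (Fin D) (Fin D) ℝ) (hA : A = 1 - α • ST)
    (Om : ℕ → Matrix (Fin D) (Fin D) ℝ)
    (hOm : ∀ k, Om k = (1 / α) • (ST⁻¹ * (1 - A ^ k)))
    (B : Matrix (Fin D) (Fin D) ℝ)
    (H : ℕ → Matrix (Fin D) (Fin D) ℝ)
    (hH : ∀ k, H k = σT ^ 2 • (ST⁻¹ - α ^ 2 • (Om k * ST * Om k))
      - σS ^ 2 • (A ^ k * SS⁻¹ * A ^ k) - A ^ k * B * A ^ k) :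
    Tendsto H atTop (nhds 0) ∧
    ∀ x : Fin D → ℝ, Tendsto (fun k => x ⬝ᵥ (H k *ᵥ x)) atTop (nhds 0) := by
  obtain ⟨hα0, hαL⟩ := hα
  have hAk : Tendsto (A ^ ·) atTop (𝓝 0) := hA ▸ hST.1.tendsto_pow_one_sub_smul fun i =>
    abs_one_sub_mul_lt_one (hST.eigenvalues_pos i) (hlmax.2 ⟨i, rfl⟩) hα0 hαL
  have hΩ (k : ℕ) :
      α ^ 2 • (Om k * ST * Om k) = ST⁻¹ * (1 - A ^ k) * ST * (ST⁻¹ * (1 - A ^ k)) := by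
    simp only [hOm, Matrix.smul_mul, Matrix.mul_smul, smul_smul]
    rw [show α ^ 2 * (1 / α * (1 / α)) = 1 by field_simp, one_smul]
  have hΩlim := tendsto_inv_mul_one_sub_mul_mul (isUnit_iff_ne_zero.2 hST.det_pos.ne') hAk
  have hsandwich (M : Matrix (Fin D) (Fin D) ℝ) :
      Tendsto (fun k => A ^ k * M * A ^ k) atTop (𝓝 0) := by
    simpa using (hAk.mul_const M).mul hAk
  have hlim := ((((tendsto_const_nhds (x := ST⁻¹)).sub hΩlim).const_smul (σT ^ 2)).sub
    ((hsandwich SS⁻¹).const_smul (σS ^ 2))).sub (hsandwich B)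
  simp only [sub_self, smul_zero] at hlim
  have hH_lim : Tendsto H atTop (𝓝 0) := hlim.congr fun k => by rw [hH, hΩ]
  refine ⟨hH_lim, fun x => ?_⟩
  simpa [Function.comp_def] using ((continuous_const.dotProduct (continuous_id.matrix_mulVec continuous_const)).tendsto
    (0 : Matrix (Fin D) (Fin D) ℝ)).comp hH_lim

/-- If `0 < α < 2/λ_max(Σ_T)`, the gain matrix
`H_k = σ_T² (Σ_T⁻¹ − α² Ω_k Σ_T Ω_k) − σ_S² A^k Σ_S⁻¹ A^k − A^k B A^k`
converges to `0` as `k → ∞`; in particular the transfer gain `xᵀ H_k x`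
converges to `0` for every `x`. -/
theorem gain_matrix_tendsto_zero
    {D : ℕ} (SS ST : Matrix (Fin D) (Fin D) ℝ)
    (hSS : SS.PosDef) (hST : ST.PosDef)
    (βS βT : Fin D → ℝ) (σS σT : ℝ) (hσS : 0 < σS) (hσT : 0 < σT)
    (lmax : ℝ) (hlmax : IsGreatest (Set.range hST.1.eigenvalues) lmax)
    (α : ℝ) (hα : 0 < α ∧ α < 2 / lmax)
    (A : Matrix (Fin D) (Fin D) ℝ) (hA : A = 1 - α • ST)
    (Om : ℕ → Matrix (Fin D) (Fin D) ℝ)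
    (hOm : ∀ k, Om k = (1 / α) • (ST⁻¹ * (1 - A ^ k)))
    (B : Matrix (Fin D) (Fin D) ℝ) (hB : B = vecMulVec (βT - βS) (βT - βS))
    (H : ℕ → Matrix (Fin D) (Fin D) ℝ)
    (hH : ∀ k, H k = σT ^ 2 • (ST⁻¹ - α ^ 2 • (Om k * ST * Om k))
      - σS ^ 2 • (A ^ k * SS⁻¹ * A ^ k) - A ^ k * B * A ^ k) :
    Tendsto H atTop (nhds 0) ∧
    ∀ x : Fin D → ℝ, Tendsto (fun k => x ⬝ᵥ (H k *ᵥ x)) atTop (nhds 0) :=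
  gain_matrix_tendsto_zero_general SS ST hST σS σT lmax hlmax α hα A hA Om hOm B H hH
end
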